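/- Suppose there exists x ∈ G with x ≠ e such that d(e) ≥ 1, d(x) ≥ 1, and d(y) = 0 for all y ∈ G \ {e, x}. Then the power series F_e(t) ∈ ℤ[[t]] is not the inverse of a polynomial: there is no polynomial q(t) ∈ ℤ[t] such that F_e(t)·q(t) = 1 in ℤ[[t]]. -/

import Mathlib

/-- `aCoef d n x` is the sum over all `n`-tuples `(y₁, …, yₙ)` of elements of `G`
with `y₁ ⋯ yₙ = x` of the products `d y₁ ⋯ d yₙ`. -/
def aCoef {G : Type*} [Group G] [Fintype G] [DecidableEq G] (d : G → ℕ) (n : ℕ) (x : G) : ℕ :=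
  ∑ y ∈ Finset.univ.filter (fun y : Fin n → G => (List.ofFn y).prod = x), ∏ i, d (y i)

/-- The generating power series `F_x(t) = Σ_{n ≥ 0} a_n(x) tⁿ ∈ ℤ[[t]]`. -/
def genSeries {G : Type*} [Group G] [Fintype G] [DecidableEq G] (d : G → ℕ) (x : G) :
    PowerSeries ℤ :=
  PowerSeries.mk fun n => (aCoef d n x : ℤ)

lemma aCoef_succ {G : Type*} [Group G] [Fintype G] [DecidableEq G] (d : G → ℕ) (n : ℕ) (x : G) :
    aCoef d (n+1) x = ∑ y : G, d y * aCoef d n (y⁻¹ * x) := by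
  unfold aCoef
  simp only [Finset.sum_filter, Finset.mul_sum, mul_ite, mul_zero]
  rw [← (Fin.consEquiv (fun _ : Fin (n+1) => G)).sum_comp
      (fun z : Fin (n+1) → G => if (List.ofFn z).prod = x then ∏ i, d (z i) else 0)]
  rw [Fintype.sum_prod_type]
  refine Finset.sum_congr rfl fun y _ => Finset.sum_congr rfl fun t _ => ?_
  have h1 : (List.ofFn (Fin.consEquiv (fun _ : Fin (n+1) => G) (y, t))).prod
      = y * (List.ofFn t).prod := by
    simp [List.ofFn_succ, Fin.consEquiv]
  have h2 : (∏ i, d ((Fin.consEquiv (fun _ : Fin (n+1) => G) (y, t)) i))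
      = d y * ∏ i, d (t i) := by
    simp [Fin.consEquiv, Fin.prod_univ_succ]
  rw [h1, h2]
  exact (if_congr (by rw [eq_inv_mul_iff_mul_eq]) rfl rfl).symm

open PowerSeries

lemma aCoef_zero {G : Type*} [Group G] [Fintype G] [DecidableEq G] (d : G → ℕ) (x : G) :
    aCoef d 0 x = if x = 1 then 1 else 0 := by
  unfold aCoef
  split_ifs with h
  · subst h
    rw [Finset.filter_true_of_mem (by simp), Finset.univ_unique]
    simp
  · rw [Finset.filter_false_of_mem (fun y _ => by simpa using Ne.symm h)]
    simp

lemma genSeries_rec {G : Type*} [Group G] [Fintype G] [DecidableEq G] (d : G → ℕ)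
    (g : G) (hg : g ≠ 1) (hd : ∀ y : G, y ≠ 1 → y ≠ g → d y = 0) (x : G) :
    genSeries d x = (if x = 1 then 1 else 0)
      + PowerSeries.X * (PowerSeries.C (R := ℤ) (d 1) * genSeries d x
        + PowerSeries.C (R := ℤ) (d g) * genSeries d (g⁻¹ * x)) := by
  ext n
  cases n with
  | zero =>
    simp [genSeries, aCoef_zero]
  | succ n =>
    rw [map_add, PowerSeries.coeff_succ_X_mul]
    have hone : PowerSeries.coeff (R := ℤ) (n+1) ((if x = 1 then 1 else 0) : PowerSeries ℤ) = 0 := by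
      split_ifs <;> simp [PowerSeries.coeff_one]
    rw [hone, zero_add, map_add, PowerSeries.coeff_C_mul, PowerSeries.coeff_C_mul]
    simp only [genSeries, PowerSeries.coeff_mk]
    rw [aCoef_succ]
    have hsub : ∑ y : G, (d y) * aCoef d n (y⁻¹ * x)
        = ∑ y ∈ ({1, g} : Finset G), (d y) * aCoef d n (y⁻¹ * x) := by
      refine (Finset.sum_subset (Finset.subset_univ _) fun y _ hy => ?_).symm
      simp only [Finset.mem_insert, Finset.mem_singleton, not_or] at hy
      rw [hd y hy.1 hy.2, zero_mul]
    rw [hsub, Finset.sum_pair (Ne.symm hg)]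
    push_cast
    simp

theorem stmt13 {G : Type*} [Group G] [Fintype G] [DecidableEq G] (d : G → ℕ)
    (g : G) (hg : g ≠ 1) (he : 1 ≤ d 1) (hx : 1 ≤ d g)
    (hd : ∀ y : G, y ≠ 1 → y ≠ g → d y = 0) :
    ¬ ∃ q : Polynomial ℤ, genSeries d (1 : G) * (q : PowerSeries ℤ) = 1 := by
  rintro ⟨q, hq⟩
  set a : ℤ := (d 1 : ℤ) with ha
  set b : ℤ := (d g : ℤ) with hb
  set A : Polynomial ℤ := 1 - Polynomial.C a * Polynomial.X with hA
  set B : Polynomial ℤ := Polynomial.C b * Polynomial.X with hB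
  clear_value a b A B
  set m : ℕ := orderOf g with hm
  have hm0 : 0 < m := orderOf_pos g
  have hm1 : m ≠ 1 := fun h => hg (orderOf_eq_one_iff.mp h)
  have hm2 : 2 ≤ m := by omega
  have hcA : (A : PowerSeries ℤ) = 1 - PowerSeries.C (R := ℤ) a * PowerSeries.X := by
    rw [hA, Polynomial.coe_sub, Polynomial.coe_one, Polynomial.coe_mul, Polynomial.coe_C,
      Polynomial.coe_X]
  have hcB : (B : PowerSeries ℤ) = PowerSeries.C (R := ℤ) b * PowerSeries.X := by
    rw [hB, Polynomial.coe_mul, Polynomial.coe_C, Polynomial.coe_X]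
  have key : ∀ x : G, (A : PowerSeries ℤ) * genSeries d x
      = (if x = 1 then 1 else 0) + (B : PowerSeries ℤ) * genSeries d (g⁻¹ * x) := by
    intro x
    have h := genSeries_rec d g hg hd x
    rw [hcA, hcB, ha, hb]
    linear_combination h
  have ind : ∀ k : ℕ, k + 1 ≤ m → (A : PowerSeries ℤ) ^ (k+1) * genSeries d (1 : G)
      = (A : PowerSeries ℤ) ^ k
        + (B : PowerSeries ℤ) ^ (k+1) * genSeries d ((g ^ (k+1))⁻¹) := by
    intro k
    induction k with
    | zero =>
      intro _
      have h := key (1 : G)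
      simp only [if_pos rfl, mul_one] at h
      simpa [pow_one] using h
    | succ k ih =>
      intro hk2
      have hk : k + 1 ≤ m := by omega
      have hne : ((g ^ (k+1))⁻¹ : G) ≠ 1 := by
        rw [ne_eq, inv_eq_one]
        intro hcon
        have := orderOf_dvd_of_pow_eq_one hcon
        rw [← hm] at this
        have := Nat.le_of_dvd (by omega) this
        omega
      have hkey := key ((g ^ (k+1))⁻¹)
      rw [if_neg hne, zero_add] at hkey
      have hmul : g⁻¹ * (g ^ (k+1))⁻¹ = (g ^ (k+2))⁻¹ := by
        group
      calc (A : PowerSeries ℤ) ^ (k+2) * genSeries d (1 : G)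
          = (A : PowerSeries ℤ) * ((A : PowerSeries ℤ) ^ (k+1) * genSeries d (1 : G)) := by
            ring
        _ = (A : PowerSeries ℤ) * ((A : PowerSeries ℤ) ^ k
              + (B : PowerSeries ℤ) ^ (k+1) * genSeries d ((g ^ (k+1))⁻¹)) := by
            rw [ih hk]
        _ = (A : PowerSeries ℤ) ^ (k+1)
              + (B : PowerSeries ℤ) ^ (k+1)
                * ((A : PowerSeries ℤ) * genSeries d ((g ^ (k+1))⁻¹)) := by ring
        _ = (A : PowerSeries ℤ) ^ (k+1)
              + (B : PowerSeries ℤ) ^ (k+2) * genSeries d ((g ^ (k+2))⁻¹) := by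
            rw [hkey, hmul]; ring
  have main : ((A : PowerSeries ℤ) ^ m - (B : PowerSeries ℤ) ^ m) * genSeries d (1 : G)
      = (A : PowerSeries ℤ) ^ (m - 1) := by
    have h := ind (m - 1) (by omega)
    have hm' : m - 1 + 1 = m := by omega
    rw [hm'] at h
    have hgm : g ^ m = 1 := by rw [hm]; exact pow_orderOf_eq_one g
    rw [hgm, inv_one] at h
    linear_combination h
  have hps : ((A ^ (m-1) * q : Polynomial ℤ) : PowerSeries ℤ)
      = ((A ^ m - B ^ m : Polynomial ℤ) : PowerSeries ℤ) := by
    simp only [Polynomial.coe_mul, Polynomial.coe_pow, Polynomial.coe_sub]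
    calc (A : PowerSeries ℤ) ^ (m-1) * (q : PowerSeries ℤ)
        = ((A : PowerSeries ℤ) ^ m - (B : PowerSeries ℤ) ^ m)
            * (genSeries d (1 : G) * (q : PowerSeries ℤ)) := by rw [← main]; ring
      _ = (A : PowerSeries ℤ) ^ m - (B : PowerSeries ℤ) ^ m := by rw [hq, mul_one]
  have hpoly : A ^ (m-1) * q = A ^ m - B ^ m := Polynomial.coe_injective ℤ hps
  -- evaluate at (d 1 : ℚ)⁻¹
  have ha0 : (d 1 : ℚ) ≠ 0 := by positivity
  have hb0 : (d g : ℚ) ≠ 0 := by positivity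
  have hev := congrArg (Polynomial.aeval ((d 1 : ℚ))⁻¹) hpoly
  have hevA : Polynomial.aeval ((d 1 : ℚ))⁻¹ A = 0 := by
    rw [hA]
    simp [ha, mul_inv_cancel₀ ha0]
  have hevB : Polynomial.aeval ((d 1 : ℚ))⁻¹ B = (d g : ℚ) * ((d 1 : ℚ))⁻¹ := by
    rw [hB]
    simp [hb]
  rw [map_mul, map_sub, map_pow, map_pow, map_pow, hevA, hevB,
    zero_pow (by omega : m - 1 ≠ 0), zero_pow (by omega : m ≠ 0), zero_mul, zero_sub] at hev
  have : ((d g : ℚ) * ((d 1 : ℚ))⁻¹) ^ m ≠ 0 := by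
    apply pow_ne_zero
    exact mul_ne_zero hb0 (inv_ne_zero ha0)
  exact this (by linarith [hev])
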